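/- Let G be a finite game and σ a Nash equilibrium of G that is not isolated (i.e., σ is a limit of Nash equilibria distinct from σ). Then there is no finite game \hat G, obtained from G by adding and/or deleting pure strategies that are strictly inferior replies to σ, in which σ is the unique Nash equilibrium. -/
import Mathlib


open Finset

variable {N : ℕ} {S : Fin N → Type*} [∀ n, Fintype (S n)] [∀ n, DecidableEq (S n)]

/-- The mixed-strategy profile `σ` lies in `Σ = Π_n Σ_n` (a product of simplices). -/
def InSimplex (σ : ∀ n, S n → ℝ) : Prop :=
  (∀ n s, 0 ≤ σ n s) ∧ ∀ n, ∑ s, σ n s = 1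

/-- A pure strategy viewed as a mixed strategy (Dirac distribution). -/
noncomputable def pureStrat {n : Fin N} (a : S n) : S n → ℝ :=
  fun b => if b = a then 1 else 0

/-- Multilinear extension of the payoff `u n` of player `n` to mixed profiles. -/
noncomputable def expPay (u : ∀ _ : Fin N, (∀ m, S m) → ℝ)
    (σ : ∀ n, S n → ℝ) (n : Fin N) : ℝ :=
  ∑ s : ∀ m, S m, (∏ m, σ m (s m)) * u n s

/-- `G_n(a, σ_{-n})`: player `n`'s payoff from the pure strategy `a` against `σ_{-n}`. -/
noncomputable def devPay (u : ∀ _ : Fin N, (∀ m, S m) → ℝ)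
    (σ : ∀ n, S n → ℝ) (n : Fin N) (a : S n) : ℝ :=
  expPay u (Function.update σ n (pureStrat a)) n

/-- `σ` is a Nash equilibrium. -/
def IsNashEq (u : ∀ _ : Fin N, (∀ m, S m) → ℝ) (σ : ∀ n, S n → ℝ) : Prop :=
  InSimplex σ ∧ ∀ n (a : S n), devPay u σ n a ≤ expPay u σ n

/-- `φ_{n,s_n}(σ) = max {0, G_n(s_n, σ_{-n}) − G_n(σ)}`. -/
noncomputable def phi (u : ∀ _ : Fin N, (∀ m, S m) → ℝ)
    (σ : ∀ n, S n → ℝ) (n : Fin N) (a : S n) : ℝ :=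
  max 0 (devPay u σ n a - expPay u σ n)

/-- Nash's map `f`. -/
noncomputable def nashMap (u : ∀ _ : Fin N, (∀ m, S m) → ℝ)
    (σ : ∀ n, S n → ℝ) : ∀ n, S n → ℝ :=
  fun n a => (σ n a + phi u σ n a) / (1 + ∑ t, phi u σ n t)


set_option linter.unusedSectionVars false

lemma prod_split (σ : ∀ n, S n → ℝ) (n : Fin N) (c : S n → ℝ) (s : ∀ m, S m) :
    (∏ m, Function.update σ n c m (s m)) = c (s n) * ∏ m ∈ Finset.univ.erase n, σ m (s m) := by
  rw [← Finset.mul_prod_erase Finset.univ _ (Finset.mem_univ n)]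
  congr 1
  · simp
  · exact Finset.prod_congr rfl fun m hm => by rw [Function.update_of_ne (Finset.ne_of_mem_erase hm)]

lemma expPay_update (u : ∀ _ : Fin N, (∀ m, S m) → ℝ) (σ : ∀ n, S n → ℝ) (n : Fin N) (c : S n → ℝ) :
    expPay u (Function.update σ n c) n = ∑ a, c a * devPay u σ n a := by
  have hdev : ∀ a : S n, devPay u σ n a
      = ∑ s : ∀ m, S m, (if s n = a then 1 else 0) * ((∏ m ∈ Finset.univ.erase n, σ m (s m)) * u n s) := by
    intro a
    simp only [devPay, expPay, prod_split, pureStrat, mul_assoc]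
  simp only [hdev, Finset.mul_sum]
  rw [Finset.sum_comm]
  simp only [expPay, prod_split, mul_assoc]
  refine Finset.sum_congr rfl fun s _ => ?_
  rw [Finset.sum_congr rfl (fun a (_ : a ∈ Finset.univ) =>
    show c a * ((if s n = a then 1 else 0) * ((∏ m ∈ Finset.univ.erase n, σ m (s m)) * u n s))
        = if s n = a then c a * ((∏ m ∈ Finset.univ.erase n, σ m (s m)) * u n s) else 0 from by
      by_cases h : s n = a <;> simp [h]), Finset.sum_ite_eq]
  simp

lemma expPay_eq_sum (u : ∀ _ : Fin N, (∀ m, S m) → ℝ) (σ : ∀ n, S n → ℝ) (n : Fin N) :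
    expPay u σ n = ∑ a, σ n a * devPay u σ n a := by
  conv_lhs => rw [← Function.update_eq_self n σ]
  exact expPay_update u σ n (σ n)

lemma zero_of_strict {u : ∀ _ : Fin N, (∀ m, S m) → ℝ} {τ : ∀ n, S n → ℝ}
    (hτ : IsNashEq u τ) {n : Fin N} {s t : S n}
    (h : devPay u τ n s < devPay u τ n t) : τ n s = 0 := by
  by_contra h0
  have hpos : 0 < τ n s := (hτ.1.1 n s).lt_of_ne (Ne.symm h0)
  have hE : ∀ a, devPay u τ n a ≤ expPay u τ n := hτ.2 n
  have hlt : devPay u τ n s < expPay u τ n := h.trans_le (hE t)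
  have : expPay u τ n < expPay u τ n := by
    calc expPay u τ n = ∑ a, τ n a * devPay u τ n a := expPay_eq_sum u τ n
    _ < ∑ a, τ n a * expPay u τ n :=
        Finset.sum_lt_sum (fun a _ => mul_le_mul_of_nonneg_left (hE a) (hτ.1.1 n a))
          ⟨s, Finset.mem_univ s, mul_lt_mul_of_pos_left hlt hpos⟩
    _ = expPay u τ n := by rw [← Finset.sum_mul, hτ.1.2 n, one_mul]
  exact lt_irrefl _ this

set_option linter.unusedSectionVars false

section Hat
variable {Shat : Fin N → Type*} [∀ n, Fintype (Shat n)] [∀ n, DecidableEq (Shat n)]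

noncomputable def hatMap (keep : ∀ n, S n → Prop) [∀ n, DecidablePred (keep n)]
    (e : ∀ n, S n → Shat n) (τ : ∀ n, S n → ℝ) : ∀ n, Shat n → ℝ :=
  fun n t => ∑ s ∈ Finset.univ.filter (fun s => keep n s ∧ e n s = t), τ n s

variable (keep : ∀ n, S n → Prop) [∀ n, DecidablePred (keep n)] (e : ∀ n, S n → Shat n)

lemma hatMap_eq_of_vanish {τ : ∀ n, S n → ℝ} (hvan : ∀ n s, ¬ keep n s → τ n s = 0)
    (n : Fin N) (t : Shat n) :
    hatMap keep e τ n t = ∑ s ∈ Finset.univ.filter (fun s => e n s = t), τ n s := by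
  rw [hatMap, Finset.sum_filter, Finset.sum_filter]
  refine Finset.sum_congr rfl fun s _ => ?_
  by_cases hk : keep n s
  · simp [hk]
  · simp [hk, hvan n s hk]

lemma sum_hatMap {τ : ∀ n, S n → ℝ} (hvan : ∀ n s, ¬ keep n s → τ n s = 0) (n : Fin N) :
    ∑ t, hatMap keep e τ n t = ∑ s, τ n s := by
  simp only [hatMap_eq_of_vanish keep e hvan n]
  exact Finset.sum_fiberwise _ _ _

lemma expPay_hatMap (uhat : ∀ _ : Fin N, (∀ m, Shat m) → ℝ) (u : ∀ _ : Fin N, (∀ m, S m) → ℝ)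
    (hpay : ∀ (s : ∀ m, S m), (∀ m, keep m (s m)) → ∀ n, uhat n (fun m => e m (s m)) = u n s)
    {τ : ∀ n, S n → ℝ} (hvan : ∀ n s, ¬ keep n s → τ n s = 0) (n : Fin N) :
    expPay uhat (hatMap keep e τ) n = expPay u τ n := by
  have h1 : ∀ sh : (∀ m, Shat m), (∏ m, hatMap keep e τ m (sh m))
      = ∑ p ∈ Finset.univ.filter (fun p : ∀ m, S m => (fun m => e m (p m)) = sh), ∏ m, τ m (p m) := by
    intro sh
    simp only [hatMap_eq_of_vanish keep e hvan]
    rw [Finset.prod_univ_sum]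
    apply Finset.sum_congr
    · ext p; simp [Fintype.mem_piFinset, funext_iff]
    · intros; rfl
  calc expPay uhat (hatMap keep e τ) n
      = ∑ sh : ∀ m, Shat m, ∑ p ∈ Finset.univ.filter
          (fun p : ∀ m, S m => (fun m => e m (p m)) = sh),
          (∏ m, τ m (p m)) * uhat n (fun m => e m (p m)) := by
        rw [expPay]; simp only [h1, Finset.sum_mul]
        refine Finset.sum_congr rfl fun sh _ => Finset.sum_congr rfl fun p hp => ?_
        rw [(Finset.mem_filter.1 hp).2]
    _ = ∑ p : ∀ m, S m, (∏ m, τ m (p m)) * uhat n (fun m => e m (p m)) :=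
        Finset.sum_fiberwise _ _ _
    _ = expPay u τ n := by
        refine Finset.sum_congr rfl fun p _ => ?_
        by_cases hk : ∀ m, keep m (p m)
        · rw [hpay p hk n]
        · push_neg at hk; obtain ⟨m, hm⟩ := hk
          rw [Finset.prod_eq_zero (Finset.mem_univ m) (hvan m (p m) hm), zero_mul, zero_mul]

lemma hatMap_update (τ : ∀ n, S n → ℝ) (n : Fin N) (c : S n → ℝ) :
    hatMap keep e (Function.update τ n c) =
      Function.update (hatMap keep e τ) n
        (fun t => ∑ s ∈ Finset.univ.filter (fun s => keep n s ∧ e n s = t), c s) := by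
  funext m t
  rcases eq_or_ne m n with rfl | h
  · simp [hatMap]
  · simp [hatMap, Function.update_of_ne h]

lemma hatMap_pure {n : Fin N} {a : S n} (hk : keep n a) (t : Shat n) :
    (∑ s ∈ Finset.univ.filter (fun s => keep n s ∧ e n s = t), pureStrat a s)
      = pureStrat (e n a) t := by
  rcases eq_or_ne (e n a) t with rfl | h
  · rw [Finset.sum_eq_single_of_mem a (by simp [hk]) (fun b _ hb => by simp [pureStrat, hb])]
    simp [pureStrat]
  · rw [Finset.sum_eq_zero, pureStrat, if_neg (Ne.symm h)]
    intro b hb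
    simp only [Finset.mem_filter] at hb
    have hba : b ≠ a := fun hba => h (hba ▸ hb.2.2)
    simp [pureStrat, hba]

lemma devPay_hatMap (uhat : ∀ _ : Fin N, (∀ m, Shat m) → ℝ) (u : ∀ _ : Fin N, (∀ m, S m) → ℝ)
    (hpay : ∀ (s : ∀ m, S m), (∀ m, keep m (s m)) → ∀ n, uhat n (fun m => e m (s m)) = u n s)
    {τ : ∀ n, S n → ℝ} (hvan : ∀ n s, ¬ keep n s → τ n s = 0) (n : Fin N)
    {a : S n} (hk : keep n a) :
    devPay uhat (hatMap keep e τ) n (e n a) = devPay u τ n a := by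
  have hv2 : ∀ m s, ¬ keep m s → Function.update τ n (pureStrat a) m s = 0 := by
    intro m s hm
    rcases eq_or_ne m n with rfl | h
    · have hsa : s ≠ a := fun h' => hm (h' ▸ hk)
      simp [pureStrat, hsa]
    · rw [Function.update_of_ne h]; exact hvan m s hm
  rw [devPay, devPay, ← expPay_hatMap keep e uhat u hpay hv2 n, hatMap_update]
  have hfe : (fun t => ∑ s ∈ Finset.univ.filter (fun s => keep n s ∧ e n s = t), pureStrat a s)
      = pureStrat (e n a) := funext (hatMap_pure keep e hk)
  rw [hfe]

lemma hatMap_apply_of_keep (hinj : ∀ n s t, keep n s → keep n t → e n s = e n t → s = t)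
    (τ : ∀ n, S n → ℝ) {n : Fin N} {s : S n} (hk : keep n s) :
    hatMap keep e τ n (e n s) = τ n s := by
  rw [hatMap]
  have hfil : Finset.univ.filter (fun s' => keep n s' ∧ e n s' = e n s) = {s} := by
    ext b
    simp only [Finset.mem_filter, Finset.mem_univ, true_and, Finset.mem_singleton]
    exact ⟨fun ⟨hb, heb⟩ => hinj n b s hb hk heb, fun h => by subst h; exact ⟨hk, rfl⟩⟩
  rw [hfil, Finset.sum_singleton]

lemma continuous_hatMap : Continuous (hatMap keep e (Shat := Shat)) :=
  continuous_pi fun n => continuous_pi fun t =>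
    continuous_finset_sum _ fun s _ => (continuous_apply s).comp (continuous_apply n)

end Hat

lemma continuous_expPay (u : ∀ _ : Fin N, (∀ m, S m) → ℝ) (n : Fin N) :
    Continuous fun τ : ∀ n, S n → ℝ => expPay u τ n :=
  continuous_finset_sum _ fun s _ =>
    (continuous_finset_prod _ fun m _ =>
      (continuous_apply (s m)).comp (continuous_apply m)).mul continuous_const

lemma continuous_update_const (n : Fin N) (c : S n → ℝ) :
    Continuous fun τ : ∀ n, S n → ℝ => Function.update τ n c := by
  apply continuous_pi; intro m
  rcases eq_or_ne m n with rfl | h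
  · simp only [Function.update_self]; exact continuous_const
  · simp only [Function.update_of_ne h]; exact continuous_apply m

lemma continuous_devPay (u : ∀ _ : Fin N, (∀ m, S m) → ℝ) (n : Fin N) (a : S n) :
    Continuous fun τ : ∀ n, S n → ℝ => devPay u τ n a :=
  (continuous_expPay u n).comp (continuous_update_const n (pureStrat a))


/-- A non-isolated equilibrium `σ` of `G` cannot be made the unique equilibrium of a
game `Ĝ` obtained from `G` by deleting pure strategies (`¬ keep`) that are strictly
inferior replies to `σ` and adding pure strategies (those outside the image of the
kept ones) that are strictly inferior replies to the copy `σ̂` of `σ` in `Ĝ`. -/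
theorem non_isolated_cannot_be_made_unique
    (u : ∀ _ : Fin N, (∀ m, S m) → ℝ) (σ : ∀ n, S n → ℝ)
    (hNash : IsNashEq u σ)
    (hnoniso : ∀ ε > 0, ∃ τ, IsNashEq u τ ∧ τ ≠ σ ∧ dist τ σ < ε)
    -- the game Ĝ:
    (Shat : Fin N → Type*) [∀ n, Fintype (Shat n)] [∀ n, DecidableEq (Shat n)]
    (uhat : ∀ _ : Fin N, (∀ m, Shat m) → ℝ)
    (keep : ∀ n, S n → Prop) [∀ n, DecidablePred (keep n)]
    (e : ∀ n, S n → Shat n)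
    (hinj : ∀ n s t, keep n s → keep n t → e n s = e n t → s = t)
    -- payoffs agree on kept strategy profiles
    (hpay : ∀ (s : ∀ m, S m), (∀ m, keep m (s m)) →
      ∀ n, uhat n (fun m => e m (s m)) = u n s)
    -- σ̂, the copy of σ in Ĝ:
    (σhat : ∀ n, Shat n → ℝ)
    (hσhat : ∀ n t, σhat n t =
      ∑ s ∈ Finset.univ.filter (fun s => keep n s ∧ e n s = t), σ n s)
    -- deleted strategies are strictly inferior replies to σ in G
    (hdel : ∀ n (s : S n), ¬ keep n s →
      ∃ t : S n, devPay u σ n s < devPay u σ n t)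
    -- added strategies are strictly inferior replies to σ̂ in Ĝ
    (hadd : ∀ n (t : Shat n), (¬ ∃ s, keep n s ∧ e n s = t) →
      ∃ t' : Shat n, devPay uhat σhat n t < devPay uhat σhat n t') :
    ¬ (IsNashEq uhat σhat ∧ ∀ τ, IsNashEq uhat τ → τ = σhat) := by
  rintro ⟨hNashHat, huniq⟩
  classical
  have hσe : σhat = hatMap keep e σ := by
    funext n t; rw [hσhat n t]; rfl
  choose tdel htdel using hdel
  have haddσ : ∀ n (t : Shat n), (¬ ∃ s, keep n s ∧ e n s = t) →
      devPay uhat σhat n t < expPay uhat σhat n := by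
    intro n t h
    obtain ⟨t', ht'⟩ := hadd n t h
    exact ht'.trans_le (hNashHat.2 n t')
  have hev1 : ∀ᶠ τ in nhds σ, ∀ n (s : S n) (h : ¬ keep n s),
      devPay u τ n s < devPay u τ n (tdel n s h) := by
    rw [Filter.eventually_all]
    intro n
    rw [Filter.eventually_all]
    intro s
    by_cases h : keep n s
    · exact Filter.Eventually.of_forall fun τ h' => absurd h h'
    · have hb := ((continuous_devPay u n s).continuousAt (x := σ)).eventually_lt
        ((continuous_devPay u n (tdel n s h)).continuousAt) (htdel n s h)
      exact hb.mono fun τ hτ _ => hτ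
  have hev2 : ∀ᶠ τ in nhds σ, ∀ n (t : Shat n), (¬ ∃ s, keep n s ∧ e n s = t) →
      devPay uhat (hatMap keep e τ) n t < expPay uhat (hatMap keep e τ) n := by
    rw [Filter.eventually_all]
    intro n
    rw [Filter.eventually_all]
    intro t
    by_cases h : ∃ s, keep n s ∧ e n s = t
    · exact Filter.Eventually.of_forall fun τ h' => absurd h h'
    · have hc1 : Continuous fun τ => devPay uhat (hatMap keep e τ) n t :=
        (continuous_devPay uhat n t).comp (continuous_hatMap keep e)
      have hc2 : Continuous fun τ => expPay uhat (hatMap keep e τ) n :=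
        (continuous_expPay uhat n).comp (continuous_hatMap keep e)
      have hσlt : devPay uhat (hatMap keep e σ) n t < expPay uhat (hatMap keep e σ) n := by
        rw [← hσe]; exact haddσ n t h
      exact ((hc1.continuousAt (x := σ)).eventually_lt hc2.continuousAt hσlt).mono
        fun τ hτ _ => hτ
  obtain ⟨ε, hε, hball⟩ := Metric.eventually_nhds_iff.1 (hev1.and hev2)
  obtain ⟨τ, hτNash, hτne, hτd⟩ := hnoniso ε hε
  obtain ⟨hP1, hP2⟩ := hball hτd
  have hvanτ : ∀ n s, ¬ keep n s → τ n s = 0 := fun n s h => zero_of_strict hτNash (hP1 n s h)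
  have hvanσ : ∀ n s, ¬ keep n s → σ n s = 0 := fun n s h => zero_of_strict hNash (htdel n s h)
  have hτhatNash : IsNashEq uhat (hatMap keep e τ) := by
    refine ⟨⟨fun n t => Finset.sum_nonneg fun s _ => hτNash.1.1 n s, fun n => ?_⟩, ?_⟩
    · rw [sum_hatMap keep e hvanτ n, hτNash.1.2 n]
    · intro n t
      by_cases h : ∃ s, keep n s ∧ e n s = t
      · obtain ⟨s, hk, rfl⟩ := h
        rw [devPay_hatMap keep e uhat u hpay hvanτ n hk,
          expPay_hatMap keep e uhat u hpay hvanτ n]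
        exact hτNash.2 n s
      · exact (hP2 n t h).le
  have heq := huniq _ hτhatNash
  rw [hσe] at heq
  apply hτne
  funext n s
  by_cases hk : keep n s
  · have hc := congrFun (congrFun heq n) (e n s)
    rwa [hatMap_apply_of_keep keep e hinj τ hk, hatMap_apply_of_keep keep e hinj σ hk] at hc
  · rw [hvanτ n s hk, hvanσ n s hk]
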